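/- Under the same setup, if all subdata values of covariate j lie in [z_{(1)j}, z_{(n)j}] and λ_max(R) is the largest eigenvalue of the subdata sample correlation matrix, then V(β̂ⱼ) ≥ 4σ² / (k λ_max(R) (z_{(n)j} - z_{(1)j})²). -/

import Mathlib

open Matrix

/-- Sample mean of the `j`-th covariate column. -/
noncomputable def sMean {k p : ℕ} (z : Fin k → Fin p → ℝ) (j : Fin p) : ℝ :=
  (∑ i, z i j) / k

/-- Sample variance of the `j`-th covariate column. -/
noncomputable def sVar {k p : ℕ} (z : Fin k → Fin p → ℝ) (j : Fin p) : ℝ :=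
  (∑ i, (z i j - sMean z j) ^ 2) / ((k : ℝ) - 1)

/-- Sample correlation matrix of the covariate columns. -/
noncomputable def sCorr {k p : ℕ} (z : Fin k → Fin p → ℝ) :
    Matrix (Fin p) (Fin p) ℝ :=
  Matrix.of fun j₁ j₂ =>
    (∑ i, (z i j₁ - sMean z j₁) * (z i j₂ - sMean z j₂)) /
      (((k : ℝ) - 1) * Real.sqrt (sVar z j₁ * sVar z j₂))

/-- Design matrix with an all-ones first column. -/
def designX {k p : ℕ} (z : Fin k → Fin p → ℝ) :
    Matrix (Fin k) (Fin (p + 1)) ℝ :=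
  Matrix.of fun i j => (Fin.cons 1 (z i) : Fin (p + 1) → ℝ) j

/-!
Write `A = XᵀX` for the design matrix `X`. For any `v` with `v_{j+1} = 1`, Cauchy–Schwarz for
the inner product defined by `A` gives `(A⁻¹)_{j+1,j+1} ≥ 1 / vᵀAv`. Taking `v = (-z̄_j, e_j)`
makes `Xv` the centred `j`-th column, so `vᵀAv = Σᵢ (z_{ij} - z̄_j)² ≤ k (z_max - z_min)² / 4`.
This already bounds the variance without `λ_max(R)`, which only weakens it: `R` has unit
diagonal, so its eigenvalues average to `1` and `λ_max(R) ≥ 1`.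

`A` is positive definite because `R` is: `R` is congruent to `ZᵀZ` for the centred data matrix `Z`,
so `Z` is injective, and then so is `X`, since summing the rows of `Xc = 0` kills the centred part.
-/

namespace Matrix

variable {n : Type*} [Fintype n] [DecidableEq n]

theorem PosDef.one_div_dotProduct_mulVec_le_inv_apply {A : Matrix n n ℝ} (hA : A.PosDef)
    {v : n → ℝ} {i : n} (hv : v i = 1) : 1 / (v ⬝ᵥ A *ᵥ v) ≤ A⁻¹ i i := by
  have hAinv : A * A⁻¹ = 1 := mul_nonsing_inv A ((isUnit_iff_isUnit_det A).1 hA.isUnit)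
  have hAT : Aᵀ = A := hA.1
  set q := v ⬝ᵥ A *ᵥ v
  have hq : 0 < q := hA.dotProduct_mulVec_pos (x := v) (fun h => by simp [h] at hv)
  set w := A⁻¹ *ᵥ Pi.single i 1
  have hAw : A *ᵥ w = Pi.single i 1 := by rw [mulVec_mulVec, hAinv, one_mulVec]
  have hvAw : v ⬝ᵥ A *ᵥ w = 1 := by rw [hAw, dotProduct_single, hv, mul_one]
  have hwAv : w ⬝ᵥ A *ᵥ v = 1 := by
    rw [dotProduct_mulVec, ← mulVec_transpose, hAT, dotProduct_comm, hvAw]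
  have hwAw : w ⬝ᵥ A *ᵥ w = A⁻¹ i i := by
    rw [hAw, dotProduct_single, mul_one]
    simp [w, mulVec_single]
  -- Cauchy–Schwarz for the form of `A`: expand `0 ≤ uᵀAu` for `u = v - q w`.
  have hform : 0 ≤ (v - q • w) ⬝ᵥ A *ᵥ (v - q • w) := hA.posSemidef.dotProduct_mulVec_nonneg _
  have hexpand : (v - q • w) ⬝ᵥ A *ᵥ (v - q • w) = q * (q * A⁻¹ i i - 1) := by
    simp only [mulVec_sub, mulVec_smul, sub_dotProduct, dotProduct_sub, smul_dotProduct,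
      dotProduct_smul, smul_eq_mul, hwAw, hwAv, hvAw]
    ring
  rw [div_le_iff₀ hq]
  nlinarith

theorem IsHermitian.one_le_sup'_eigenvalues {A : Matrix n n ℝ} (hA : A.IsHermitian)
    (hdiag : ∀ i, A i i = 1) (hn : (Finset.univ : Finset n).Nonempty) :
    1 ≤ Finset.univ.sup' hn hA.eigenvalues := by
  have htrace : ∑ i, hA.eigenvalues i = Fintype.card n := by
    simpa [Matrix.trace, hdiag] using hA.trace_eq_sum_eigenvalues.symm
  have hcard : (0 : ℝ) < Fintype.card n := by exact_mod_cast Fintype.card_pos_iff.2 ⟨hn.choose⟩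
  have hsum := Finset.sum_le_card_nsmul Finset.univ hA.eigenvalues
    (Finset.univ.sup' hn hA.eigenvalues) fun i _ => Finset.le_sup' _ (Finset.mem_univ i)
  rw [htrace, nsmul_eq_mul, Finset.card_univ] at hsum
  nlinarith

end Matrix

noncomputable def centered {k p : ℕ} (z : Fin k → Fin p → ℝ) : Matrix (Fin k) (Fin p) ℝ :=
  of fun i l => z i l - sMean z l

section SampleStatistics

variable {k p : ℕ} (z : Fin k → Fin p → ℝ)

theorem sum_sub_sMean (l : Fin p) : ∑ i, (z i l - sMean z l) = 0 := by
  rcases Nat.eq_zero_or_pos k with rfl | hk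
  · simp
  · rw [Finset.sum_sub_distrib, Finset.sum_const, Finset.card_univ, Fintype.card_fin,
      nsmul_eq_mul, sMean, mul_div_cancel₀ _ (by positivity), sub_self]

theorem sum_sq_sub_sMean (hk : 2 ≤ k) (l : Fin p) :
    ∑ i, (z i l - sMean z l) ^ 2 = (k - 1) * sVar z l := by
  have hk1 : (k : ℝ) - 1 ≠ 0 := (sub_pos.2 (by exact_mod_cast hk)).ne'
  rw [sVar, mul_div_cancel₀ _ hk1]

theorem sum_sq_sub_sMean_le (l : Fin p) (c : ℝ) :
    ∑ i, (z i l - sMean z l) ^ 2 ≤ ∑ i, (z i l - c) ^ 2 := by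
  have hsplit : ∑ i, (z i l - c) ^ 2 = ∑ i, ((z i l - sMean z l) ^ 2 +
      2 * (sMean z l - c) * (z i l - sMean z l) + (sMean z l - c) ^ 2) :=
    Finset.sum_congr rfl fun _ _ => by ring
  rw [hsplit, Finset.sum_add_distrib, Finset.sum_add_distrib, ← Finset.mul_sum, sum_sub_sMean,
    mul_zero, add_zero]
  exact le_add_of_nonneg_right (Finset.sum_nonneg fun _ _ => sq_nonneg _)

theorem sum_sq_sub_sMean_le_of_mem_Icc {l : Fin p} {a b : ℝ} (h : ∀ i, z i l ∈ Set.Icc a b) :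
    ∑ i, (z i l - sMean z l) ^ 2 ≤ k * (b - a) ^ 2 / 4 :=
  calc ∑ i, (z i l - sMean z l) ^ 2
      ≤ ∑ i, (z i l - (a + b) / 2) ^ 2 := sum_sq_sub_sMean_le z l _
    _ ≤ ∑ _i : Fin k, ((b - a) / 2) ^ 2 := Finset.sum_le_sum fun i _ => by
        obtain ⟨hai, hib⟩ := h i
        exact sq_le_sq' (by linarith) (by linarith)
    _ = k * (b - a) ^ 2 / 4 := by
        rw [Finset.sum_const, Finset.card_univ, Fintype.card_fin, nsmul_eq_mul]; ring

theorem sCorr_apply_self (hk : 2 ≤ k) {l : Fin p} (hl : 0 < sVar z l) : sCorr z l l = 1 := by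
  have hk1 : (0 : ℝ) < k - 1 := sub_pos.2 (by exact_mod_cast hk)
  simp only [sCorr, of_apply, ← sq, sum_sq_sub_sMean z hk, Real.sqrt_sq hl.le]
  exact div_self (mul_pos hk1 hl).ne'

theorem sCorr_eq_diagonal_mul_mul_diagonal (hk : 1 ≤ k) :
    sCorr z = diagonal (fun l => (√((k - 1) * sVar z l))⁻¹) * ((centered z)ᵀ * centered z) *
      diagonal (fun l => (√((k - 1) * sVar z l))⁻¹) := by
  have hk1 : (0 : ℝ) ≤ k - 1 := sub_nonneg.2 (by exact_mod_cast hk)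
  have hvar (l : Fin p) : 0 ≤ sVar z l :=
    div_nonneg (Finset.sum_nonneg fun _ _ => sq_nonneg _) hk1
  ext a b
  rw [mul_diagonal, diagonal_mul, mul_apply, sCorr, of_apply, Real.sqrt_mul hk1,
    Real.sqrt_mul hk1, Real.sqrt_mul (hvar a)]
  conv_lhs => rw [← Real.mul_self_sqrt hk1]
  simp only [centered, transpose_apply, of_apply]
  ring

theorem centered_mulVec_injective (hk : 2 ≤ k) (hvar : ∀ l, 0 < sVar z l)
    (hR : (sCorr z).PosDef) : Function.Injective (centered z).mulVec := by
  have hk1 : (0 : ℝ) < k - 1 := sub_pos.2 (by exact_mod_cast hk)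
  rw [sCorr_eq_diagonal_mul_mul_diagonal z (by omega)] at hR
  set D := diagonal fun l => (√((k - 1) * sVar z l))⁻¹
  have hunit : IsUnit D := isUnit_diagonal.2 <| Pi.isUnit_iff.2 fun l =>
    (inv_pos.2 (Real.sqrt_pos.2 (mul_pos hk1 (hvar l)))).ne'.isUnit
  have hstar : star D = D := by rw [star_eq_conjTranspose, diagonal_conjTranspose, star_trivial]
  nth_rw 1 [← hstar] at hR
  rw [IsUnit.posDef_star_left_conjugate_iff hunit] at hR
  refine fun a b hab => sub_eq_zero.1 (by_contra fun hne => ?_)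
  have hpos := hR.dotProduct_mulVec_pos hne
  rw [star_trivial, ← mulVec_mulVec, dotProduct_mulVec, vecMul_transpose, mulVec_sub, hab,
    sub_self, zero_dotProduct] at hpos
  exact lt_irrefl _ hpos

end SampleStatistics

section Design

variable {k p : ℕ} (z : Fin k → Fin p → ℝ)

theorem designX_mulVec (c : Fin (p + 1) → ℝ) :
    designX z *ᵥ c = fun i => (c 0 + ∑ l, sMean z l * c l.succ) + (centered z *ᵥ Fin.tail c) i := by
  funext i
  simp only [mulVec, dotProduct, designX, centered, of_apply, Fin.sum_univ_succ, Fin.cons_zero,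
    Fin.cons_succ, Fin.tail, sub_mul, Finset.sum_sub_distrib]
  ring

theorem sum_centered_mulVec (w : Fin p → ℝ) : ∑ i, (centered z *ᵥ w) i = 0 := by
  simp only [mulVec, dotProduct, centered, of_apply]
  rw [Finset.sum_comm]
  simp only [← Finset.sum_mul, sum_sub_sMean, zero_mul, Finset.sum_const_zero]

theorem designX_mulVec_injective (hk : 2 ≤ k) (hvar : ∀ l, 0 < sVar z l)
    (hR : (sCorr z).PosDef) : Function.Injective (designX z).mulVec := by
  refine fun a b hab => sub_eq_zero.1 ?_
  set c := a - b
  set α := c 0 + ∑ l, sMean z l * c l.succ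
  have hc : designX z *ᵥ c = 0 := by rw [mulVec_sub, hab, sub_self]
  have hXc (i : Fin k) : α + (centered z *ᵥ Fin.tail c) i = 0 :=
    (congrFun (designX_mulVec z c) i).symm.trans (congrFun hc i)
  have hα : α = 0 := by
    have hsum := Finset.sum_congr rfl fun i (_ : i ∈ Finset.univ) => hXc i
    rw [Finset.sum_add_distrib, sum_centered_mulVec, Finset.sum_const, Finset.card_univ,
      Fintype.card_fin, nsmul_eq_mul] at hsum
    simpa [show (k : ℝ) ≠ 0 by positivity] using hsum
  have htail : Fin.tail c = 0 := centered_mulVec_injective z hk hvar hR <| by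
    funext i
    simpa [hα] using hXc i
  have hsucc (l : Fin p) : c l.succ = 0 := congrFun htail l
  have hhead : c 0 = 0 := by simpa [α, hsucc] using hα
  funext i
  exact Fin.cases hhead hsucc i

theorem designX_transpose_mul_self_posDef (hk : 2 ≤ k) (hvar : ∀ l, 0 < sVar z l)
    (hR : (sCorr z).PosDef) : ((designX z)ᵀ * designX z).PosDef := by
  simpa using PosDef.conjTranspose_mul_self _ (designX_mulVec_injective z hk hvar hR)

theorem designX_mulVec_cons_neg_sMean (l : Fin p) :
    designX z *ᵥ Fin.cons (-sMean z l) (Pi.single l 1) = fun i => z i l - sMean z l := by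
  funext i
  simp [designX_mulVec, centered, Pi.single_apply]

end Design

theorem stmt_14_general {k p : ℕ} (hk : 2 ≤ k) (z : Fin k → Fin p → ℝ) (j : Fin p)
    (zmin zmax : ℝ)
    (hbound : ∀ i, z i j ∈ Set.Icc zmin zmax)
    (hvar : ∀ l, 0 < sVar z l) (hR : (sCorr z).PosDef)
    (σ2 : ℝ) (hσ2 : 0 < σ2) :
    4 * σ2 /
        ((k : ℝ) * (Finset.univ.sup' ⟨j, Finset.mem_univ j⟩ hR.1.eigenvalues) *
          (zmax - zmin) ^ 2) ≤
      σ2 * (((designX z)ᵀ * designX z)⁻¹ j.succ j.succ) := by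
  set lam := Finset.univ.sup' ⟨j, Finset.mem_univ j⟩ hR.1.eigenvalues
  set q := ∑ i, (z i j - sMean z j) ^ 2 with hq_def
  have hq : 0 < q := by
    have hk1 : (0 : ℝ) < k - 1 := sub_pos.2 (by exact_mod_cast hk)
    rw [hq_def, sum_sq_sub_sMean z hk j]
    exact mul_pos hk1 (hvar j)
  have hlam : 1 ≤ lam := hR.1.one_le_sup'_eigenvalues (fun l => sCorr_apply_self z hk (hvar l)) _
  have hq_le : q ≤ k * lam * (zmax - zmin) ^ 2 / 4 :=
    (sum_sq_sub_sMean_le_of_mem_Icc z hbound).trans <| by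
      have : (0 : ℝ) ≤ k * (zmax - zmin) ^ 2 := by positivity
      nlinarith
  have hinv : 1 / q ≤ ((designX z)ᵀ * designX z)⁻¹ j.succ j.succ := by
    have hv : (Fin.cons (-sMean z j) (Pi.single j 1) : Fin (p + 1) → ℝ) j.succ = 1 := by simp
    have hA := designX_transpose_mul_self_posDef z hk hvar hR
    have := hA.one_div_dotProduct_mulVec_le_inv_apply hv
    rw [← mulVec_mulVec, dotProduct_mulVec, vecMul_transpose, designX_mulVec_cons_neg_sMean] at this
    simpa only [dotProduct, ← sq] using this
  calc 4 * σ2 / (k * lam * (zmax - zmin) ^ 2)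
      = σ2 * (1 / (k * lam * (zmax - zmin) ^ 2 / 4)) := by rw [one_div_div]; ring
    _ ≤ σ2 * (1 / q) := by gcongr
    _ ≤ σ2 * ((designX z)ᵀ * designX z)⁻¹ j.succ j.succ := by gcongr

/-- IBOSS variance lower bound: if all subdata values of covariate `j` lie in
`[zmin, zmax]`, then the variance of the `j`-th slope estimator satisfies
`V(β̂ⱼ) ≥ 4σ²/(k λ_max(R) (zmax - zmin)²)`. -/
theorem stmt_14 {k p : ℕ} (hk : 2 ≤ k) (z : Fin k → Fin p → ℝ) (j : Fin p)
    (zmin zmax : ℝ) (hminmax : zmin < zmax)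
    (hbound : ∀ i, z i j ∈ Set.Icc zmin zmax)
    (hvar : ∀ l, 0 < sVar z l) (hR : (sCorr z).PosDef)
    (σ2 : ℝ) (hσ2 : 0 < σ2) :
    4 * σ2 /
        ((k : ℝ) * (Finset.univ.sup' ⟨j, Finset.mem_univ j⟩ hR.1.eigenvalues) *
          (zmax - zmin) ^ 2) ≤
      σ2 * (((designX z)ᵀ * designX z)⁻¹ j.succ j.succ) :=
  stmt_14_general hk z j zmin zmax hbound hvar hR σ2 hσ2
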